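/- Let U = min_j U_j where, for each coordinate j ∈ {1,...,d}, U_j is the maximal number q such that the q smallest j-th components among all requests (with per-type multiplicities capped as in Algorithm 2) sum to at most k·b_j. Then any set of requests that can be packed into k bins of capacity b, all active at a single common time instant, has cardinality at most U. -/

import Mathlib

/-!
Fix a coordinate `j`. A feasible packing of `c i ≤ mult i` copies of each type into `k` bins
uses at most `k * (b j / a i j)` copies of type `i` whenever `a i j > 0`, so `c i ≤ p i` and the
packed requests form a sub-multiset `M` of the multiset whose sorted list is `Sj j`. Their `j`-th
components sum to at most `k * b j`, and the `card M` smallest entries of `Sj j` sum to no more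
than `M` does, so `card M ≤ Uj j` by the maximality of `Uj j`.
-/

namespace List

variable {α : Type*} [AddCommMonoid α] [PartialOrder α] [IsOrderedAddMonoid α]

theorem sum_take_cons_le_sum_take {a : α} {l : List α} (ha : ∀ y ∈ l, a ≤ y) {q : ℕ}
    (hq : q ≤ l.length) : ((a :: l).take q).sum ≤ (l.take q).sum := by
  cases q with
  | zero => simp
  | succ q =>
    have hq' : q < l.length := hq
    rw [take_succ_cons, sum_cons, take_add_one, getElem?_eq_getElem hq', Option.toList_some,
      sum_append, sum_singleton, add_comm]
    exact add_le_add le_rfl (ha _ (getElem_mem hq'))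

theorem sum_take_le_sum_take_of_sublist {l₁ l₂ : List α} (h : l₁ <+ l₂)
    (hl₂ : l₂.Pairwise (· ≤ ·)) {q : ℕ} (hq : q ≤ l₁.length) :
    (l₂.take q).sum ≤ (l₁.take q).sum := by
  induction h generalizing q with
  | slnil => rfl
  | cons a h ih =>
    rw [pairwise_cons] at hl₂
    exact (sum_take_cons_le_sum_take hl₂.1 (hq.trans h.length_le)).trans (ih hl₂.2 hq)
  | cons_cons a h ih =>
    cases q with
    | zero => simp
    | succ q =>
      simp only [take_succ_cons, sum_cons]
      exact add_le_add le_rfl (ih hl₂.of_cons (by simpa using hq))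

end List

namespace Multiset

variable {α : Type*} [AddCommMonoid α] [LinearOrder α] [IsOrderedAddMonoid α]

theorem sum_take_sort_le_sum_of_le {s t : Multiset α} (h : s ≤ t) :
    ((t.sort).take (card s)).sum ≤ s.sum := by
  have hsub : s.sort.Sublist t.sort := by
    refine List.sublist_of_subperm_of_pairwise ?_ (pairwise_sort s _) (pairwise_sort t _)
    rwa [← coe_le, sort_eq, sort_eq]
  calc ((t.sort).take (card s)).sum ≤ ((s.sort).take (card s)).sum :=
        List.sum_take_le_sum_take_of_sublist hsub (pairwise_sort t _)
          (length_sort (s := s) _).ge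
    _ = s.sum := by rw [← length_sort (r := (· ≤ ·)), List.take_length, ← sum_coe, sort_eq]

theorem card_le_of_sum_take_sort_maximal {s t : Multiset α} (h : s ≤ t) {C : α}
    (hs : s.sum ≤ C) {U : ℕ}
    (hU : ∀ q ≤ (t.sort).length, ((t.sort).take q).sum ≤ C → q ≤ U) : card s ≤ U :=
  hU _ (by rw [length_sort]; exact card_le_card h) ((sum_take_sort_le_sum_of_le h).trans hs)

end Multiset

section Packing

variable {ι β : Type*} [Fintype ι] [Fintype β] {x : ι → β → ℕ} {w : ι → ℕ} {B : ℕ}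

theorem sum_mul_le_card_mul_of_forall_bin_le (hpack : ∀ bin, ∑ i, x i bin * w i ≤ B) :
    ∑ i, (∑ bin, x i bin) * w i ≤ Fintype.card β * B :=
  calc ∑ i, (∑ bin, x i bin) * w i = ∑ bin, ∑ i, x i bin * w i := by
        simp_rw [Finset.sum_mul]; exact Finset.sum_comm
    _ ≤ ∑ _bin : β, B := Finset.sum_le_sum fun bin _ => hpack bin
    _ = Fintype.card β * B := by simp

theorem sum_le_card_mul_div_of_forall_bin_le (hpack : ∀ bin, ∑ i, x i bin * w i ≤ B)
    {i : ι} (hw : 0 < w i) : ∑ bin, x i bin ≤ Fintype.card β * (B / w i) :=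
  calc ∑ bin, x i bin ≤ ∑ _bin : β, B / w i := Finset.sum_le_sum fun bin _ => by
        rw [Nat.le_div_iff_mul_le hw]
        exact (Finset.single_le_sum (fun i' _ => Nat.zero_le (x i' bin * w i'))
          (Finset.mem_univ i)).trans (hpack bin)
    _ = Fintype.card β * (B / w i) := by simp

end Packing

open Finset in
theorem stmt9_general (d k τ : ℕ) (hd : 0 < d) (b : Fin d → ℕ)
    (a : Fin τ → Fin d → ℕ) (ha : ∀ i, ∃ j, 0 < a i j) (mult : Fin τ → ℕ)
    (p : Fin τ → ℕ)
    (hp : ∀ i, p i = min (mult i) (k * sInf {q : ℕ | ∃ j, 0 < a i j ∧ q = b j / a i j}))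
    (Sj : Fin d → List ℕ)
    (hSj : ∀ j, Sj j = Multiset.sort (∑ i : Fin τ, (p i) • ({a i j} : Multiset ℕ)) (· ≤ ·))
    (Uj : Fin d → ℕ)
    (hUjmax : ∀ j, ∀ q ≤ (Sj j).length, ((Sj j).take q).sum ≤ k * b j → q ≤ Uj j)
    (c : Fin τ → ℕ) (hc : ∀ i, c i ≤ mult i)
    (x : Fin τ → Fin k → ℕ)
    (hx : ∀ i, ∑ j, x i j = c i)
    (hpack : ∀ (bin : Fin k) (coord : Fin d), ∑ i, x i bin * a i coord ≤ b coord) :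
    ∑ i, c i ≤ sInf (Set.range Uj) := by
  have hcp : ∀ i, c i ≤ p i := by
    intro i
    obtain ⟨j, hj, hmin⟩ := Nat.sInf_mem (s := {q : ℕ | ∃ j, 0 < a i j ∧ q = b j / a i j})
      (let ⟨j, hj⟩ := ha i; ⟨_, j, hj, rfl⟩)
    rw [hp i, hmin]
    refine le_min (hc i) ?_
    simpa [hx] using sum_le_card_mul_div_of_forall_bin_le (fun bin => hpack bin j) hj
  have hbound : ∀ j, ∑ i, c i ≤ Uj j := by
    intro j
    have hle : ∑ i, c i • ({a i j} : Multiset ℕ) ≤ ∑ i, p i • ({a i j} : Multiset ℕ) :=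
      Finset.sum_le_sum fun i _ => nsmul_le_nsmul_left (Multiset.zero_le _) (hcp i)
    have hsum : (∑ i, c i • ({a i j} : Multiset ℕ)).sum ≤ k * b j := by
      simpa [Multiset.sum_sum, Multiset.sum_nsmul, hx] using
        sum_mul_le_card_mul_of_forall_bin_le (fun bin => hpack bin j)
    simpa using Multiset.card_le_of_sum_take_sort_maximal hle hsum (hSj j ▸ hUjmax j)
  have hne : (Set.range Uj).Nonempty := Set.range_nonempty_iff_nonempty.mpr ⟨⟨0, hd⟩⟩
  obtain ⟨j, hj⟩ := Nat.sInf_mem hne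
  exact hj ▸ hbound j

open Finset in
/-- Correctness of the upper bound `U = min_j U_j` from Algorithm 2.
Types `i ∈ Fin τ` have vectors `a i`, multiplicities `mult i`; the capped
multiplicity is `p i = min (mult i) (k ⋅ min_{j : a i j > 0} ⌊b j / a i j⌋)`.
`Sj j` is the sorted list of `j`-th components with these multiplicities, and
`Uj j` is the largest `q` such that the `q` smallest entries sum to `≤ k·b j`.
Any collection of requests (counts `c i ≤ mult i`), all active at one common
time instant, that can be packed into `k` bins of capacity `b` has cardinality
at most `min_j Uj j`. -/
theorem stmt9 (d k τ : ℕ) (hd : 0 < d) (b : Fin d → ℕ) (hb : ∀ j, 0 < b j)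
    (a : Fin τ → Fin d → ℕ) (ha : ∀ i, ∃ j, 0 < a i j) (mult : Fin τ → ℕ)
    (p : Fin τ → ℕ)
    (hp : ∀ i, p i = min (mult i) (k * sInf {q : ℕ | ∃ j, 0 < a i j ∧ q = b j / a i j}))
    (Sj : Fin d → List ℕ)
    (hSj : ∀ j, Sj j = Multiset.sort (∑ i : Fin τ, (p i) • ({a i j} : Multiset ℕ)) (· ≤ ·))
    (Uj : Fin d → ℕ)
    (hUjlen : ∀ j, Uj j ≤ (Sj j).length)
    (hUjsum : ∀ j, ((Sj j).take (Uj j)).sum ≤ k * b j)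
    (hUjmax : ∀ j, ∀ q ≤ (Sj j).length, ((Sj j).take q).sum ≤ k * b j → q ≤ Uj j)
    (c : Fin τ → ℕ) (hc : ∀ i, c i ≤ mult i)
    (x : Fin τ → Fin k → ℕ)
    (hx : ∀ i, ∑ j, x i j = c i)
    (hpack : ∀ (bin : Fin k) (coord : Fin d), ∑ i, x i bin * a i coord ≤ b coord) :
    ∑ i, c i ≤ sInf (Set.range Uj) :=
  stmt9_general d k τ hd b a ha mult p hp Sj hSj Uj hUjmax c hc x hx hpack
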